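/- Sub-gamma (Bernstein/Massart) inequality: let U_1, …, U_n be independent real random variables and suppose there exist constants v > 0 and w > 0 such that Σ_{i=1}^n E[U_i²] ≤ v and, for all integers k ≥ 3, Σ_{i=1}^n E[(U_i)_+^k] ≤ v · k! · w^{k−2} / 2. Then for any ζ ∈ (0, 1/w), E[exp(ζ Σ_{i=1}^n (U_i − E U_i))] ≤ exp(v ζ² / (2 (1 − w ζ))). -/

import Mathlib

/-!
For `ζ ≥ 0` and real `x`, `exp (ζ x) ≤ 1 + ζ x + (ζ x)² / 2 + φ (ζ x₊)` with
`φ y = ∑_{k ≥ 3} y ^ k / k!`, because on `(-∞, 0]` the exponential lies below its quadratic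
Taylor polynomial. Taking expectations, expanding `φ` in the moments of the positive part and
using `1 + y ≤ exp y` bounds the moment generating function of each centred `U i` by
`exp (ζ² E[U i²] / 2 + ∑_{k ≥ 3} ζ ^ k E[(U i)₊ ^ k] / k!)`. Independence multiplies these
bounds, and the moment hypothesis dominates the higher-order terms, summed over `i`, by the
geometric series `v ζ² / 2 · ∑_{k ≥ 1} (w ζ) ^ k`.
-/

open MeasureTheory ProbabilityTheory Real Finset
open scoped Nat

namespace Real

lemma exp_eq_tsum_pow_div_factorial (x : ℝ) : exp x = ∑' k : ℕ, x ^ k / k ! := by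
  rw [exp_eq_exp_ℝ, NormedSpace.exp_eq_tsum_div]

lemma exp_le_one_add_add_sq_div_two_of_nonpos {x : ℝ} (hx : x ≤ 0) :
    exp x ≤ 1 + x + x ^ 2 / 2 := by
  have hderiv (y : ℝ) : HasDerivAt (fun y ↦ 1 + y + y ^ 2 / 2 - exp y) (1 + y - exp y) y := by
    simpa using ((((hasDerivAt_id' y).const_add 1).fun_add
      ((hasDerivAt_pow 2 y).div_const 2)).fun_sub (hasDerivAt_exp y))
  have hanti := antitone_of_hasDerivAt_nonpos (f' := fun y ↦ 1 + y - exp y) hderiv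
    fun y ↦ by simpa [add_comm] using add_one_le_exp y
  simpa using hanti hx

lemma exp_le_taylor_add_exp_max_sub_taylor (x : ℝ) :
    exp x ≤ ∑ k ∈ range 3, x ^ k / k ! +
      (exp (max x 0) - ∑ k ∈ range 3, max x 0 ^ k / k !) := by
  rcases le_total 0 x with hx | hx
  · simp [max_eq_left hx]
  · norm_num [max_eq_right hx, sum_range_succ]
    linarith [exp_le_one_add_add_sq_div_two_of_nonpos hx]

end Real

section MomentSeries

variable {α : Type*} [MeasurableSpace α] {μ : Measure α} {Y : α → ℝ}

lemma integral_mul_pow_div_factorial (t : ℝ) (k : ℕ) :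
    ∫ a, (t * Y a) ^ k / (k ! : ℝ) ∂μ = t ^ k * (∫ a, Y a ^ k ∂μ) / k ! := by
  simp_rw [mul_pow]
  rw [integral_div, integral_const_mul]

lemma MeasureTheory.Integrable.mul_pow_div_factorial {k : ℕ}
    (h : Integrable (fun a ↦ Y a ^ k) μ) (t : ℝ) :
    Integrable (fun a ↦ (t * Y a) ^ k / k !) μ := by
  simpa only [mul_pow] using (h.const_mul (t ^ k)).div_const _

variable {t : ℝ} (hY : ∀ a, 0 ≤ Y a) (ht : 0 ≤ t) (hmom : ∀ k : ℕ, Integrable (fun a ↦ Y a ^ k) μ)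
  (hsum : Summable fun k : ℕ ↦ t ^ k * (∫ a, Y a ^ k ∂μ) / k !)
include hY ht hmom hsum

lemma integrable_exp_mul_of_summable_moments : Integrable (fun a ↦ exp (t * Y a)) μ := by
  have hterm_nonneg (k : ℕ) (a : α) : 0 ≤ (t * Y a) ^ k / k ! := by
    have := hY a; positivity
  have hmeas : AEStronglyMeasurable Y μ := by simpa using (hmom 1).1
  refine ⟨continuous_exp.comp_aestronglyMeasurable (hmeas.const_mul t), ?_⟩
  rw [hasFiniteIntegral_iff_ofReal (ae_of_all _ fun a ↦ (exp_pos _).le)]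
  calc ∫⁻ a, ENNReal.ofReal (exp (t * Y a)) ∂μ
      = ∫⁻ a, ∑' k : ℕ, ENNReal.ofReal ((t * Y a) ^ k / k !) ∂μ := by
        refine lintegral_congr fun a ↦ ?_
        rw [exp_eq_tsum_pow_div_factorial, ENNReal.ofReal_tsum_of_nonneg (hterm_nonneg · a)
          (NormedSpace.expSeries_div_summable _)]
    _ = ∑' k : ℕ, ENNReal.ofReal (t ^ k * (∫ a, Y a ^ k ∂μ) / k !) := by
        rw [lintegral_tsum fun k ↦ ((hmom k).mul_pow_div_factorial t).aemeasurable.ennreal_ofReal]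
        refine tsum_congr fun k ↦ ?_
        rw [← integral_mul_pow_div_factorial, ofReal_integral_eq_lintegral_ofReal
          ((hmom k).mul_pow_div_factorial t) (ae_of_all _ (hterm_nonneg k))]
    _ < ⊤ := by
        rw [← ENNReal.ofReal_tsum_of_nonneg (fun k ↦ ?_) hsum]
        · exact ENNReal.ofReal_lt_top
        · rw [← integral_mul_pow_div_factorial]
          exact integral_nonneg (hterm_nonneg k)

lemma hasSum_integral_exp_mul : HasSum (fun k : ℕ ↦ t ^ k * (∫ a, Y a ^ k ∂μ) / k !)
    (∫ a, exp (t * Y a) ∂μ) := by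
  simp_rw [exp_eq_tsum_pow_div_factorial, ← integral_mul_pow_div_factorial]
  refine hasSum_integral_of_summable_integral_norm
    (fun k ↦ (hmom k).mul_pow_div_factorial t) (hsum.congr fun k ↦ ?_)
  rw [← integral_mul_pow_div_factorial]
  refine integral_congr_ae (ae_of_all _ fun a ↦ ?_)
  have := hY a
  exact (norm_of_nonneg (by positivity)).symm

end MomentSeries

section SingleVariable

variable {Ω : Type*} [MeasurableSpace Ω] {μ : Measure Ω} {X : Ω → ℝ} {t : ℝ}

lemma integrable_pow_of_integrable_abs_pow (hX : AEStronglyMeasurable X μ) {k : ℕ}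
    (h : Integrable (fun ω ↦ |X ω| ^ k) μ) : Integrable (fun ω ↦ X ω ^ k) μ :=
  h.mono' (hX.pow k) (ae_of_all _ fun ω ↦ by simp)

lemma integrable_max_zero_pow_of_integrable_abs_pow (hX : AEStronglyMeasurable X μ) {k : ℕ}
    (h : Integrable (fun ω ↦ |X ω| ^ k) μ) : Integrable (fun ω ↦ max (X ω) 0 ^ k) μ := by
  refine h.mono' ((hX.sup aestronglyMeasurable_const).pow k) (ae_of_all _ fun ω ↦ ?_)
  rw [norm_pow, norm_of_nonneg (le_max_right _ _)]
  exact pow_le_pow_left₀ (le_max_right _ _) (max_le (le_abs_self _) (abs_nonneg _)) k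

lemma integral_exp_mul_le (hX : AEStronglyMeasurable X μ)
    (hmom : ∀ k : ℕ, Integrable (fun ω ↦ |X ω| ^ k) μ) (ht : 0 ≤ t)
    (hsum : Summable fun k : ℕ ↦ t ^ k * (∫ ω, max (X ω) 0 ^ k ∂μ) / k !) :
    ∫ ω, exp (t * X ω) ∂μ ≤ ∑ k ∈ range 3, t ^ k * (∫ ω, X ω ^ k ∂μ) / k ! +
      ∑' k : ℕ, t ^ (k + 3) * (∫ ω, max (X ω) 0 ^ (k + 3) ∂μ) / (k + 3)! := by
  set Y : Ω → ℝ := fun ω ↦ max (X ω) 0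
  have hY : ∀ k : ℕ, Integrable (fun ω ↦ Y ω ^ k) μ := fun k ↦
    integrable_max_zero_pow_of_integrable_abs_pow hX (hmom k)
  have htaylor {Z : Ω → ℝ} (hZ : ∀ k : ℕ, Integrable (fun ω ↦ Z ω ^ k) μ) :
      Integrable (fun ω ↦ ∑ k ∈ range 3, (t * Z ω) ^ k / (k ! : ℝ)) μ ∧
      ∫ ω, ∑ k ∈ range 3, (t * Z ω) ^ k / (k ! : ℝ) ∂μ =
        ∑ k ∈ range 3, t ^ k * (∫ ω, Z ω ^ k ∂μ) / k ! := by
    have hint (k : ℕ) (_ : k ∈ range 3) := (hZ k).mul_pow_div_factorial t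
    refine ⟨integrable_finsetSum _ hint, ?_⟩
    rw [integral_finsetSum _ hint]
    exact sum_congr rfl fun k _ ↦ integral_mul_pow_div_factorial t k
  obtain ⟨hX_taylor_int, hX_taylor⟩ := htaylor fun k ↦
    integrable_pow_of_integrable_abs_pow hX (hmom k)
  obtain ⟨hY_taylor_int, hY_taylor⟩ := htaylor hY
  have hY_nonneg (ω : Ω) : 0 ≤ Y ω := le_max_right _ _
  have hexpY := integrable_exp_mul_of_summable_moments hY_nonneg ht hY hsum
  calc ∫ ω, exp (t * X ω) ∂μ
      ≤ ∫ ω, (∑ k ∈ range 3, (t * X ω) ^ k / (k ! : ℝ) +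
          (exp (t * Y ω) - ∑ k ∈ range 3, (t * Y ω) ^ k / (k ! : ℝ))) ∂μ := by
        refine integral_mono_of_nonneg (ae_of_all _ fun _ ↦ (exp_pos _).le)
          (hX_taylor_int.add (hexpY.sub hY_taylor_int)) (ae_of_all _ fun ω ↦ ?_)
        have hmax : max (t * X ω) 0 = t * Y ω := by rw [mul_max_of_nonneg _ _ ht, mul_zero]
        simpa only [hmax] using exp_le_taylor_add_exp_max_sub_taylor (t * X ω)
    _ = _ := by
        rw [integral_add hX_taylor_int (by exact hexpY.sub hY_taylor_int),
          integral_sub hexpY hY_taylor_int, hX_taylor, hY_taylor,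
          ((hasSum_nat_add_iff' 3).mpr (hasSum_integral_exp_mul hY_nonneg ht hY hsum)).tsum_eq]

lemma mgf_sub_integral_le [IsProbabilityMeasure μ] (hX : AEStronglyMeasurable X μ)
    (hmom : ∀ k : ℕ, Integrable (fun ω ↦ |X ω| ^ k) μ) (ht : 0 ≤ t)
    (hsum : Summable fun k : ℕ ↦ t ^ k * (∫ ω, max (X ω) 0 ^ k ∂μ) / k !) :
    mgf (fun ω ↦ X ω - ∫ ω', X ω' ∂μ) μ t ≤ exp (t ^ 2 / 2 * ∫ ω, X ω ^ 2 ∂μ +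
      ∑' k : ℕ, t ^ (k + 3) * (∫ ω, max (X ω) 0 ^ (k + 3) ∂μ) / (k + 3)!) := by
  set c := ∫ ω, X ω ∂μ
  set a := t ^ 2 / 2 * ∫ ω, X ω ^ 2 ∂μ +
    ∑' k : ℕ, t ^ (k + 3) * (∫ ω, max (X ω) 0 ^ (k + 3) ∂μ) / (k + 3)!
  have hmgf : mgf X μ t ≤ 1 + t * c + a := by
    have h := integral_exp_mul_le hX hmom ht hsum
    norm_num [sum_range_succ] at h
    simp only [mgf, a]
    linarith
  calc mgf (fun ω ↦ X ω - c) μ t = mgf X μ t * exp (-(t * c)) := by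
        simp_rw [sub_eq_add_neg, mgf_add_const, mul_neg]
    _ ≤ (1 + t * c + a) * exp (-(t * c)) := by gcongr
    _ ≤ exp (t * c + a) * exp (-(t * c)) := by gcongr; linarith [add_one_le_exp (t * c + a)]
    _ = exp a := by rw [← exp_add]; ring_nf

end SingleVariable

lemma ProbabilityTheory.iIndepFun.mgf_sum_le_exp_sum {ι Ω : Type*} [MeasurableSpace Ω]
    {μ : Measure Ω} {X : ι → Ω → ℝ} {t : ℝ} (h_indep : iIndepFun X μ)
    (h_meas : ∀ i, Measurable (X i)) {s : Finset ι} {a : ι → ℝ}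
    (h : ∀ i ∈ s, mgf (X i) μ t ≤ exp (a i)) :
    mgf (∑ i ∈ s, X i) μ t ≤ exp (∑ i ∈ s, a i) := by
  rw [h_indep.mgf_sum h_meas, exp_sum]
  exact prod_le_prod (fun _ _ ↦ mgf_nonneg) h

section GeometricDomination

variable {ι : Type*} {s : Finset ι} {b : ι → ℕ → ℝ} {C r : ℝ}

lemma summable_of_sum_le_geometric (hb : ∀ i ∈ s, ∀ k, 0 ≤ b i k) (hr₀ : 0 ≤ r) (hr₁ : r < 1)
    (h : ∀ k, ∑ i ∈ s, b i k ≤ C * r ^ k) {i : ι} (hi : i ∈ s) : Summable (b i) :=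
  ((summable_geometric_of_lt_one hr₀ hr₁).mul_left C).of_nonneg_of_le (hb i hi) fun k ↦
    (single_le_sum (fun j hj ↦ hb j hj k) hi).trans (h k)

lemma sum_tsum_le_of_sum_le_geometric (hb : ∀ i ∈ s, ∀ k, 0 ≤ b i k) (hr₀ : 0 ≤ r)
    (hr₁ : r < 1) (h : ∀ k, ∑ i ∈ s, b i k ≤ C * r ^ k) :
    ∑ i ∈ s, ∑' k, b i k ≤ C / (1 - r) := by
  have hsummable i (hi : i ∈ s) := summable_of_sum_le_geometric hb hr₀ hr₁ h hi
  have hgeom := (summable_geometric_of_lt_one hr₀ hr₁).mul_left C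
  rw [← Summable.tsum_finsetSum hsummable]
  calc ∑' k, ∑ i ∈ s, b i k ≤ ∑' k, C * r ^ k :=
        (summable_sum hsummable).tsum_le_tsum h hgeom
    _ = C / (1 - r) := by rw [tsum_mul_left, tsum_geometric_of_lt_one hr₀ hr₁, div_eq_mul_inv]

end GeometricDomination

lemma sum_moment_tail_le {ι : Type*} {s : Finset ι} {m : ι → ℕ → ℝ} {v w ζ : ℝ} (hζ : 0 ≤ ζ)
    (hm : ∀ k : ℕ, 3 ≤ k → ∑ i ∈ s, m i k ≤ v * k ! * w ^ (k - 2) / 2) (k : ℕ) :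
    ∑ i ∈ s, ζ ^ (k + 3) * m i (k + 3) / (k + 3)! ≤ v * ζ ^ 3 * w / 2 * (ζ * w) ^ k := by
  calc ∑ i ∈ s, ζ ^ (k + 3) * m i (k + 3) / (k + 3)!
      = ζ ^ (k + 3) / (k + 3)! * ∑ i ∈ s, m i (k + 3) := by
        rw [mul_sum]
        exact sum_congr rfl fun _ _ ↦ by ring
    _ ≤ ζ ^ (k + 3) / (k + 3)! * (v * (k + 3)! * w ^ (k + 1) / 2) := by
        gcongr
        simpa using hm (k + 3) (by omega)
    _ = v * ζ ^ 3 * w / 2 * (ζ * w) ^ k := by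
        field_simp
        ring

theorem subgamma_exponential_moment_general
    {Ω : Type*} [MeasurableSpace Ω] (P : Measure Ω) [IsProbabilityMeasure P]
    (n : ℕ)
    (U : Fin n → Ω → ℝ) (hmeas : ∀ i, Measurable (U i))
    (hindep : iIndepFun U P)
    (hmomint : ∀ i (k : ℕ), Integrable (fun ω => |U i ω| ^ k) P)
    (v w : ℝ) (hw : 0 < w)
    (hsq : ∑ i, ∫ ω, (U i ω) ^ 2 ∂P ≤ v)
    (hmom : ∀ k : ℕ, 3 ≤ k →
      ∑ i, ∫ ω, (max (U i ω) 0) ^ k ∂P ≤ v * (Nat.factorial k) * w ^ (k - 2) / 2) :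
    ∀ ζ : ℝ, ζ ∈ Set.Ioo 0 (1 / w) →
      ∫ ω, Real.exp (ζ * ∑ i, (U i ω - ∫ ω', U i ω' ∂P)) ∂P ≤
        Real.exp (v * ζ ^ 2 / (2 * (1 - w * ζ))) := by
  rintro ζ ⟨hζ₀, hζ₁⟩
  have hζw : ζ * w < 1 := (lt_div_iff₀ hw).mp hζ₁
  set tail : Fin n → ℕ → ℝ := fun i k ↦
    ζ ^ (k + 3) * (∫ ω, max (U i ω) 0 ^ (k + 3) ∂P) / (k + 3)!
  have htail_nonneg : ∀ i ∈ univ, ∀ k, 0 ≤ tail i k := fun i _ k ↦ by positivity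
  have hgeom := sum_moment_tail_le hζ₀.le hmom
  have hcentered (i : Fin n) : mgf (fun ω ↦ U i ω - ∫ ω', U i ω' ∂P) P ζ ≤
      exp (ζ ^ 2 / 2 * ∫ ω, U i ω ^ 2 ∂P + ∑' k, tail i k) :=
    mgf_sub_integral_le (hmeas i).aestronglyMeasurable (hmomint i) hζ₀.le
      ((summable_nat_add_iff 3).mp (summable_of_sum_le_geometric htail_nonneg (by positivity)
        hζw hgeom (mem_univ i)))
  calc ∫ ω, exp (ζ * ∑ i, (U i ω - ∫ ω', U i ω' ∂P)) ∂P
      = mgf (∑ i, fun ω ↦ U i ω - ∫ ω', U i ω' ∂P) P ζ := by simp only [mgf, Finset.sum_apply]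
    _ ≤ exp (∑ i, (ζ ^ 2 / 2 * ∫ ω, U i ω ^ 2 ∂P + ∑' k, tail i k)) :=
        (hindep.comp _ fun i ↦ measurable_id.sub_const _).mgf_sum_le_exp_sum
          (fun i ↦ (hmeas i).sub_const _) fun i _ ↦ hcentered i
    _ ≤ exp (ζ ^ 2 / 2 * v + v * ζ ^ 3 * w / 2 / (1 - ζ * w)) := by
        rw [exp_le_exp, sum_add_distrib, ← mul_sum]
        gcongr
        exact sum_tsum_le_of_sum_le_geometric htail_nonneg (by positivity) hζw hgeom
    _ = exp (v * ζ ^ 2 / (2 * (1 - w * ζ))) := by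
        have : 1 - ζ * w ≠ 0 := by linarith
        rw [mul_comm w ζ]
        congr 1
        field_simp
        ring

theorem subgamma_exponential_moment
    {Ω : Type*} [MeasurableSpace Ω] (P : Measure Ω) [IsProbabilityMeasure P]
    (n : ℕ)
    (U : Fin n → Ω → ℝ) (hmeas : ∀ i, Measurable (U i))
    (hindep : iIndepFun U P)
    (hmomint : ∀ i (k : ℕ), Integrable (fun ω => |U i ω| ^ k) P)
    (v w : ℝ) (hv : 0 < v) (hw : 0 < w)
    (hsq : ∑ i, ∫ ω, (U i ω) ^ 2 ∂P ≤ v)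
    (hmom : ∀ k : ℕ, 3 ≤ k →
      ∑ i, ∫ ω, (max (U i ω) 0) ^ k ∂P ≤ v * (Nat.factorial k) * w ^ (k - 2) / 2) :
    ∀ ζ : ℝ, ζ ∈ Set.Ioo 0 (1 / w) →
      ∫ ω, Real.exp (ζ * ∑ i, (U i ω - ∫ ω', U i ω' ∂P)) ∂P ≤
        Real.exp (v * ζ ^ 2 / (2 * (1 - w * ζ))) :=
  subgamma_exponential_moment_general P n U hmeas hindep hmomint v w hw hsq hmom
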